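/- The language L_lin = { w c w^R : w ∈ {0,1}^* } is accepted by a reversible deterministic two-party Watson-Crick system with O(n) communications. -/

import Mathlib

namespace WK

/-- Tape symbols: input symbols plus the two endmarkers.
`Sum.inr false` is the left endmarker, `Sum.inr true` the right endmarker. -/
abbrev TSym (α : Type) : Type := α ⊕ Bool

/-- The tape for input `w`: left endmarker, the symbols of `w`, right endmarker. -/
def tape {α : Type} (w : List α) (k : ℕ) : TSym α :=
  ((Sum.inr false :: w.map Sum.inl) ++ [Sum.inr true]).getD k (Sum.inr true)

/-- A deterministic two-party Watson-Crick system: two finite automata (the upper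
component `1` and the lower component `2`) with a finite set `M` of messages,
partial transition functions `δᵢ` (depending on state, scanned symbol and received
message, `none` = no message) and broadcast functions `μᵢ`. -/
structure DPWK (α : Type) where
  M : Type
  Q1 : Type
  Q2 : Type
  fM : Fintype M
  fQ1 : Fintype Q1
  fQ2 : Fintype Q2
  δ1 : Q1 → TSym α → Option M → Option (Q1 × Bool)
  δ2 : Q2 → TSym α → Option M → Option (Q2 × Bool)
  μ1 : Q1 → TSym α → Option M
  μ2 : Q2 → TSym α → Option M
  q01 : Q1
  q02 : Q2
  F1 : Set Q1
  F2 : Set Q2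

/-- A configuration: states and head positions of the two components. -/
structure Config {α : Type} (A : DPWK α) where
  p : A.Q1
  i : ℕ
  q : A.Q2
  j : ℕ

/-- One synchronous (forward) computation step: each component reads its symbol,
receives the message broadcast by the other component, changes its state and
optionally moves (the upper head to the right, the lower head to the left). -/
def Step {α : Type} (A : DPWK α) (w : List α) (c c' : Config A) : Prop :=
  ∃ d1 d2 : Bool,
    A.δ1 c.p (tape w c.i) (A.μ2 c.q (tape w c.j)) = some (c'.p, d1) ∧
    A.δ2 c.q (tape w c.j) (A.μ1 c.p (tape w c.i)) = some (c'.q, d2) ∧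
    c'.i = c.i + (cond d1 1 0) ∧ c.j = c'.j + (cond d2 1 0)

/-- The initial configuration on input `w`: the upper component on the left
endmarker, the lower component on the right endmarker. -/
def initConf {α : Type} (A : DPWK α) (w : List α) : Config A :=
  ⟨A.q01, 0, A.q02, w.length + 1⟩

/-- The system halts in `c` if no successor configuration exists. -/
def Halted {α : Type} (A : DPWK α) (w : List α) (c : Config A) : Prop :=
  ¬ ∃ c', Step A w c c'

/-- A configuration is accepting if at least one component is in an accepting state. -/
def AccConf {α : Type} (A : DPWK α) (c : Config A) : Prop :=
  c.p ∈ A.F1 ∨ c.q ∈ A.F2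

/-- `cs` is an accepting computation of `A` on `w`: it starts in the initial
configuration, follows the step relation, and ends in a halting configuration
with at least one component in an accepting state. -/
def AccComp {α : Type} (A : DPWK α) (w : List α) (cs : List (Config A)) : Prop :=
  cs.head? = some (initConf A w) ∧ List.Chain' (Step A w) cs ∧
    ∃ c, cs.getLast? = some c ∧ Halted A w c ∧ AccConf A c

def Accepts {α : Type} (A : DPWK α) (w : List α) : Prop := ∃ cs, AccComp A w cs

/-- The language accepted by `A`. -/
def lang {α : Type} (A : DPWK α) : Set (List α) := { w | Accepts A w }

/-- One backward computation step, induced by reverse transition functions `δ'ᵢ` and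
reverse broadcast functions `μ'ᵢ`: the heads first move to their predecessor
positions (the upper head left, the lower head right) and then read the symbols there. -/
def BackStep {α : Type} (A : DPWK α)
    (δ'1 : A.Q1 → TSym α → Option A.M → Option (A.Q1 × Bool))
    (δ'2 : A.Q2 → TSym α → Option A.M → Option (A.Q2 × Bool))
    (μ'1 : A.Q1 → TSym α → Option A.M)
    (μ'2 : A.Q2 → TSym α → Option A.M)
    (w : List α) (c' c : Config A) : Prop :=
  ∃ d1 d2 : Bool,
    δ'1 c'.p (tape w c.i) (μ'2 c'.q (tape w c.j)) = some (c.p, d1) ∧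
    δ'2 c'.q (tape w c.j) (μ'1 c'.p (tape w c.i)) = some (c.q, d2) ∧
    c'.i = c.i + (cond d1 1 0) ∧ c.j = c'.j + (cond d2 1 0)

/-- A witness of reversibility: reverse transition and broadcast functions whose
induced backward step relation is exactly the inverse of the forward step relation,
so every configuration has at most one predecessor, computable by such a system. -/
structure RevWitness {α : Type} (A : DPWK α) where
  δ'1 : A.Q1 → TSym α → Option A.M → Option (A.Q1 × Bool)
  δ'2 : A.Q2 → TSym α → Option A.M → Option (A.Q2 × Bool)
  μ'1 : A.Q1 → TSym α → Option A.M
  μ'2 : A.Q2 → TSym α → Option A.M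
  inverse : ∀ (w : List α) (c c' : Config A),
    BackStep A δ'1 δ'2 μ'1 μ'2 w c' c ↔ Step A w c c'

/-- A reversible deterministic two-party Watson-Crick system (REV-PWK). -/
def Reversible {α : Type} (A : DPWK α) : Prop := Nonempty (RevWitness A)

/-- Number of messages (`0`, `1` or `2`) broadcast in one step from configuration `c`,
with respect to broadcast functions `μ1`, `μ2`. -/
def stepMsgs {α : Type} (A : DPWK α)
    (μ1 : A.Q1 → TSym α → Option A.M) (μ2 : A.Q2 → TSym α → Option A.M)
    (w : List α) (c : Config A) : ℕ :=
  ((μ1 c.p (tape w c.i)).elim 0 fun _ => 1) + ((μ2 c.q (tape w c.j)).elim 0 fun _ => 1)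

/-- Total number of messages sent during the computation `cs` (no messages are
sent from the final, halting configuration). -/
def commCount {α : Type} (A : DPWK α)
    (μ1 : A.Q1 → TSym α → Option A.M) (μ2 : A.Q2 → TSym α → Option A.M)
    (w : List α) (cs : List (Config A)) : ℕ :=
  (cs.dropLast.map (stepMsgs A μ1 μ2 w)).sum

/-- `A` is a reversible system that is communication bounded by `f`: it is reversible
and every word of its language is accepted by a computation in which the number of
messages sent in the forward computation and in the reverse computation are each at
most `f` of the input length. -/
def RevCommBounded {α : Type} (A : DPWK α) (f : ℕ → ℕ) : Prop :=
  ∃ Wit : RevWitness A, ∀ w ∈ lang A, ∃ cs, AccComp A w cs ∧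
    commCount A A.μ1 A.μ2 w cs ≤ f w.length ∧
    commCount A Wit.μ'1 Wit.μ'2 w cs.reverse ≤ f w.length

/-- `A` (not necessarily reversible) is communication bounded by `f`. -/
def CommBounded {α : Type} (A : DPWK α) (f : ℕ → ℕ) : Prop :=
  ∀ w ∈ lang A, ∃ cs, AccComp A w cs ∧ commCount A A.μ1 A.μ2 w cs ≤ f w.length

/-- The family of languages accepted by reversible deterministic two-party
Watson-Crick systems over the alphabet `α`. -/
def RevPWKLangs (α : Type) : Set (Set (List α)) :=
  { L | ∃ A : DPWK α, Reversible A ∧ lang A = L }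

/-- Languages accepted by REV-PWKs with `O(f)` communication. -/
def RevPWKLangsO (α : Type) (f : ℕ → ℕ) : Set (Set (List α)) :=
  { L | ∃ (A : DPWK α) (C : ℕ),
      RevCommBounded A (fun n => C * f n + C) ∧ lang A = L }

/-- Languages accepted by (possibly irreversible) DPWKs with `O(f)` communication. -/
def PWKLangsO (α : Type) (f : ℕ → ℕ) : Set (Set (List α)) :=
  { L | ∃ (A : DPWK α) (C : ℕ),
      CommBounded A (fun n => C * f n + C) ∧ lang A = L }

end WK

/-- `L_lin = { w c wᴿ : w ∈ {0,1}^* }` over the alphabet `Fin 3`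
(bits `0`, `1`, middle marker `c = 2`). -/
def Llin : Set (List (Fin 3)) :=
  { u | ∃ w : List (Fin 3), (∀ x ∈ w, x ≠ 2) ∧ u = w ++ [(2 : Fin 3)] ++ w.reverse }


/-! ### Auxiliary development for Statement 14 -/

namespace LlinProof
open WK

abbrev Msg := TSym (Fin 3)

/-- Forward transition function of the upper component. -/
def d1f : Fin 3 → TSym (Fin 3) → Option Msg → Option (Fin 3 × Bool)
  | p, Sum.inl x, some (Sum.inl y) =>
      if x = y then
        if x = 2 then (if p = 0 then some (1, true) else none)
        else (if p = 0 ∨ p = 1 then some (p, true) else none)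
      else none
  | p, Sum.inr false, some (Sum.inr true) =>
      if p = 0 ∨ p = 1 then some (p, true) else none
  | p, Sum.inr true, some (Sum.inr false) =>
      if p = 1 then some (2, true) else none
  | _, _, _ => none

/-- Reverse transition function of the upper component. -/
def d1f' : Fin 3 → TSym (Fin 3) → Option Msg → Option (Fin 3 × Bool)
  | p, Sum.inl x, some (Sum.inl y) =>
      if x = y then
        if x = 2 then (if p = 1 then some (0, true) else none)
        else (if p = 0 ∨ p = 1 then some (p, true) else none)
      else none
  | p, Sum.inr false, some (Sum.inr true) =>
      if p = 0 ∨ p = 1 then some (p, true) else none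
  | p, Sum.inr true, some (Sum.inr false) =>
      if p = 2 then some (1, true) else none
  | _, _, _ => none

/-- (Self-inverse) transition function of the lower component. -/
def d2f : Unit → TSym (Fin 3) → Option Msg → Option (Unit × Bool)
  | _, Sum.inl x, some (Sum.inl y) => if x = y then some ((), true) else none
  | _, Sum.inr true, some (Sum.inr false) => some ((), true)
  | _, Sum.inr false, some (Sum.inr true) => some ((), false)
  | _, _, _ => none

lemma key1 : ∀ (p p' : Fin 3) (a : TSym (Fin 3)) (m : Option Msg) (d : Bool),
    d1f p a m = some (p', d) ↔ d1f' p' a m = some (p, d) := by decide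

lemma key2 : ∀ (q q' : Unit) (a : TSym (Fin 3)) (m : Option Msg) (d : Bool),
    d2f q a m = some (q', d) ↔ d2f q' a m = some (q, d) := by decide

lemma d1f_two : ∀ (a : TSym (Fin 3)) (m : Option Msg), d1f 2 a m = none := by decide

lemma d1f_right0 : ∀ (m : Option Msg), d1f 0 (Sum.inr true) m = none := by decide

lemma d1f_start (p : Fin 3) (hp : p = 0 ∨ p = 1) :
    d1f p (Sum.inr false) (some (Sum.inr true)) = some (p, true) := by
  rcases hp with rfl | rfl <;> decide

lemma d1f_eq_ne2 {x : Fin 3} (h : x ≠ 2) {p : Fin 3} (hp : p = 0 ∨ p = 1) :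
    d1f p (Sum.inl x) (some (Sum.inl x)) = some (p, true) := by
  simp [d1f, h, hp]

lemma d1f_eq2_0 : d1f 0 (Sum.inl 2) (some (Sum.inl 2)) = some (1, true) := by decide

lemma d1f_eq2_1 : d1f 1 (Sum.inl 2) (some (Sum.inl 2)) = none := by decide

lemma d1f_right1 : d1f 1 (Sum.inr true) (some (Sum.inr false)) = some (2, true) := by decide

lemma d2f_eq (x : Fin 3) : d2f () (Sum.inl x) (some (Sum.inl x)) = some ((), true) := by
  simp [d2f]

lemma d2f_start : d2f () (Sum.inr true) (some (Sum.inr false)) = some ((), true) := rfl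

lemma d2f_end : d2f () (Sum.inr false) (some (Sum.inr true)) = some ((), false) := rfl

/-- The REV-PWK accepting `L_lin`. -/
def Alin : DPWK (Fin 3) where
  M := Msg
  Q1 := Fin 3
  Q2 := Unit
  fM := inferInstance
  fQ1 := inferInstance
  fQ2 := inferInstance
  δ1 := d1f
  δ2 := d2f
  μ1 := fun _ a => some a
  μ2 := fun _ a => some a
  q01 := 0
  q02 := ()
  F1 := {2}
  F2 := ∅

/-- Reversibility witness for `Alin`. -/
def wit : RevWitness Alin where
  δ'1 := d1f'
  δ'2 := d2f
  μ'1 := fun _ a => some a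
  μ'2 := fun _ a => some a
  inverse := by
    intro w c c'
    constructor
    · rintro ⟨d1, d2, h1, h2, e1, e2⟩
      exact ⟨d1, d2, (key1 _ _ _ _ _).mpr h1, (key2 _ _ _ _ _).mpr h2, e1, e2⟩
    · rintro ⟨d1, d2, h1, h2, e1, e2⟩
      exact ⟨d1, d2, (key1 _ _ _ _ _).mp h1, (key2 _ _ _ _ _).mp h2, e1, e2⟩

/-! #### Tape lemmas -/

lemma tape_zero (u : List (Fin 3)) : tape u 0 = Sum.inr false := rfl

lemma tape_succ_lt (u : List (Fin 3)) {k : ℕ} (h : k < u.length) :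
    tape u (k+1) = Sum.inl (u[k]) := by
  have h1 : k < (u.map (Sum.inl : Fin 3 → TSym (Fin 3))).length := by simpa using h
  simp only [tape, List.cons_append, List.getD_cons_succ]
  rw [List.getD_append _ _ _ _ h1, List.getD_eq_getElem _ _ h1]
  simp

lemma tape_ge (u : List (Fin 3)) {k : ℕ} (h : u.length + 1 ≤ k) :
    tape u k = Sum.inr true := by
  have h1 : (Sum.inr false :: u.map Sum.inl : List (TSym (Fin 3))).length ≤ k := by
    simp only [List.length_cons, List.length_map]; omega
  simp only [tape]
  rw [List.getD_append_right _ _ _ _ h1]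
  rcases Nat.eq_zero_or_pos (k - (u.length + 1)) with h2 | h2
  · have h3 : k - (Sum.inr false :: u.map Sum.inl : List (TSym (Fin 3))).length = 0 := by
      simp only [List.length_cons, List.length_map]; omega
    rw [h3]; rfl
  · obtain ⟨j, hj⟩ : ∃ j, k - (Sum.inr false :: u.map Sum.inl : List (TSym (Fin 3))).length
      = j + 1 := ⟨k - (u.length + 2), by simp only [List.length_cons, List.length_map]; omega⟩
    rw [hj]
    rfl

lemma tape_mid (u : List (Fin 3)) {k : ℕ} (h1 : 0 < k) (h2 : k ≤ u.length) :
    ∃ x, tape u k = Sum.inl x := by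
  obtain ⟨j, rfl⟩ : ∃ j, k = j + 1 := ⟨k - 1, by omega⟩
  exact ⟨u[j]'(by omega), tape_succ_lt u (by omega)⟩

/-! #### The invariant -/

def Good0 (u : List (Fin 3)) (i : ℕ) : Prop :=
  ∀ k, 0 < k → k < i → tape u k = tape u (u.length + 1 - k) ∧ tape u k ≠ Sum.inl 2

def Good1 (u : List (Fin 3)) (i : ℕ) : Prop :=
  (∃ k, 0 < k ∧ k < i ∧ tape u k = Sum.inl 2) ∧
  (∀ k, 0 < k → k < i → tape u k = tape u (u.length + 1 - k)) ∧
  (∀ k k', 0 < k → k < i → 0 < k' → k' < i →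
    tape u k = Sum.inl 2 → tape u k' = Sum.inl 2 → k = k')

def Inv (u : List (Fin 3)) (c : Config Alin) : Prop :=
  (c.p = (0 : Fin 3) ∧ c.i ≤ u.length + 1 ∧ c.j = u.length + 1 - c.i ∧ Good0 u c.i)
  ∨ (c.p = (1 : Fin 3) ∧ c.i ≤ u.length + 1 ∧ c.j = u.length + 1 - c.i ∧ Good1 u c.i)
  ∨ (c.p = (2 : Fin 3) ∧ Good1 u (u.length + 1))

lemma inv_init (u : List (Fin 3)) : Inv u (initConf Alin u) := by
  unfold Inv
  left
  refine ⟨rfl, ?_, ?_, ?_⟩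
  · show (0 : ℕ) ≤ u.length + 1; omega
  · show u.length + 1 = u.length + 1 - 0; omega
  · intro k hk hk'
    exact absurd hk' (by show ¬ k < 0; omega)

lemma inv_step (u : List (Fin 3)) (c c' : Config Alin)
    (h : Inv u c) (hs : Step Alin u c c') : Inv u c' := by
  obtain ⟨d1, d2, h1, h2, e1, e2⟩ := hs
  have h1' : d1f c.p (tape u c.i) (some (tape u c.j)) = some (c'.p, d1) := h1
  have h2' : d2f () (tape u c.j) (some (tape u c.i)) = some (c'.q, d2) := h2
  unfold Inv at h ⊢
  rcases h with ⟨hp, hi, hj, hg⟩ | ⟨hp, hi, hj, hg⟩ | ⟨hp, hg⟩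
  · -- phase 0
    rw [hp] at h1'
    rcases Nat.eq_zero_or_pos c.i with hz | hpos
    · -- initial step
      have hj' : c.j = u.length + 1 := by omega
      rw [hz, hj', tape_zero, tape_ge u (le_refl _)] at h1'
      rw [d1f_start 0 (Or.inl rfl)] at h1'
      obtain ⟨hcp, hd1⟩ : (0 : Fin 3) = c'.p ∧ true = d1 := by
        exact Prod.mk.inj (Option.some.inj h1')
      rw [hj', tape_ge u (le_refl _), hz, tape_zero] at h2'
      rw [d2f_start] at h2'
      obtain ⟨-, hd2⟩ : () = c'.q ∧ true = d2 := by exact Prod.mk.inj (Option.some.inj h2')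
      left
      refine ⟨hcp.symm, ?_, ?_, ?_⟩
      · subst hd1; simp at e1; omega
      · subst hd1; subst hd2; simp at e1 e2; omega
      · intro k hk hk'
        subst hd1; simp at e1
        omega
    · rcases lt_or_ge c.i (u.length + 1) with hlt | hge
      · -- middle step
        obtain ⟨x, hx⟩ := tape_mid u hpos (by omega)
        have hjpos : 0 < c.j := by omega
        have hjle : c.j ≤ u.length := by omega
        obtain ⟨y, hy⟩ := tape_mid u hjpos hjle
        rw [hx, hy] at h1' h2'
        by_cases hxy : x = y
        · subst hxy
          -- d2 is a move
          rw [d2f_eq] at h2'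
          obtain ⟨-, hd2⟩ : () = c'.q ∧ true = d2 := by exact Prod.mk.inj (Option.some.inj h2')
          subst hd2
          simp at e2
          by_cases hx2 : x = 2
          · subst hx2
            rw [d1f_eq2_0] at h1'
            obtain ⟨hcp, hd1⟩ : (1 : Fin 3) = c'.p ∧ true = d1 := by
              exact Prod.mk.inj (Option.some.inj h1')
            subst hd1
            simp at e1
            right; left
            refine ⟨hcp.symm, by omega, by omega, ⟨c.i, hpos, by omega, hx⟩, ?_, ?_⟩
            · intro k hk hk'
              rcases Nat.lt_or_ge k c.i with hklt | hkge
              · exact (hg k hk hklt).1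
              · have : k = c.i := by omega
                subst this
                rw [hx, ← hj, hy]
            · intro k k' hk hki hk' hk'i htk htk'
              have hkci : k = c.i := by
                by_contra hne
                have := (hg k hk (by omega)).2
                exact this htk
              have hk'ci : k' = c.i := by
                by_contra hne
                have := (hg k' hk' (by omega)).2
                exact this htk'
              omega
          · rw [d1f_eq_ne2 hx2 (Or.inl rfl)] at h1'
            obtain ⟨hcp, hd1⟩ : (0 : Fin 3) = c'.p ∧ true = d1 := by
              exact Prod.mk.inj (Option.some.inj h1')
            subst hd1
            simp at e1
            left
            refine ⟨hcp.symm, by omega, by omega, ?_⟩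
            intro k hk hk'
            rcases Nat.lt_or_ge k c.i with hklt | hkge
            · exact hg k hk hklt
            · have : k = c.i := by omega
              subst this
              refine ⟨by rw [hx, ← hj, hy], by rw [hx]; simp [hx2]⟩
        · -- mismatch: impossible
          exfalso
          have : d2f () (Sum.inl y) (some (Sum.inl x)) = none := by
            simp [d2f]
            intro h'
            exact (hxy h'.symm).elim
          rw [this] at h2'
          cases h2'
      · -- at the right endmarker in state 0: no step possible
        exfalso
        have hieq : c.i = u.length + 1 := by omega
        rw [hieq, tape_ge u (le_refl _)] at h1'
        rw [d1f_right0] at h1'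
        cases h1'
  · -- phase 1
    rw [hp] at h1'
    have hpos : 0 < c.i := by
      obtain ⟨k, hk, hk', -⟩ := hg.1
      omega
    rcases lt_or_ge c.i (u.length + 1) with hlt | hge
    · obtain ⟨x, hx⟩ := tape_mid u hpos (by omega)
      have hjpos : 0 < c.j := by omega
      have hjle : c.j ≤ u.length := by omega
      obtain ⟨y, hy⟩ := tape_mid u hjpos hjle
      rw [hx, hy] at h1' h2'
      by_cases hxy : x = y
      · subst hxy
        rw [d2f_eq] at h2'
        obtain ⟨-, hd2⟩ : () = c'.q ∧ true = d2 := by exact Prod.mk.inj (Option.some.inj h2')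
        subst hd2
        simp at e2
        by_cases hx2 : x = 2
        · exfalso
          subst hx2
          rw [d1f_eq2_1] at h1'
          cases h1'
        · rw [d1f_eq_ne2 hx2 (Or.inr rfl)] at h1'
          obtain ⟨hcp, hd1⟩ : (1 : Fin 3) = c'.p ∧ true = d1 := by
            exact Prod.mk.inj (Option.some.inj h1')
          subst hd1
          simp at e1
          right; left
          obtain ⟨⟨k0, hk0, hk0', hk0t⟩, hmat, huniq⟩ := hg
          refine ⟨hcp.symm, by omega, by omega, ⟨k0, hk0, by omega, hk0t⟩, ?_, ?_⟩
          · intro k hk hk'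
            rcases Nat.lt_or_ge k c.i with hklt | hkge
            · exact hmat k hk hklt
            · have : k = c.i := by omega
              subst this
              rw [hx, ← hj, hy]
          · intro k k' hk hki hk' hk'i htk htk'
            have hkci : k < c.i := by
              rcases Nat.lt_or_ge k c.i with h' | h'
              · exact h'
              · exfalso
                have : k = c.i := by omega
                subst this
                rw [hx] at htk
                exact hx2 (by simpa using htk)
            have hk'ci : k' < c.i := by
              rcases Nat.lt_or_ge k' c.i with h' | h'
              · exact h'
              · exfalso
                have : k' = c.i := by omega
                subst this
                rw [hx] at htk'
                exact hx2 (by simpa using htk')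
            exact huniq k k' hk hkci hk' hk'ci htk htk'
      · exfalso
        have : d2f () (Sum.inl y) (some (Sum.inl x)) = none := by
          simp [d2f]
          intro h'
          exact (hxy h'.symm).elim
        rw [this] at h2'
        cases h2'
    · -- final step
      have hieq : c.i = u.length + 1 := by omega
      have hjeq : c.j = 0 := by omega
      rw [hieq, tape_ge u (le_refl _), hjeq, tape_zero] at h1'
      rw [d1f_right1] at h1'
      obtain ⟨hcp, -⟩ : (2 : Fin 3) = c'.p ∧ true = d1 := by exact Prod.mk.inj (Option.some.inj h1')
      right; right
      exact ⟨hcp.symm, by rwa [hieq] at hg⟩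
  · -- phase 2: halted
    exfalso
    rw [hp, d1f_two] at h1'
    cases h1'

/-- Invariance along a chain. -/
lemma chain'_inv {γ : Type*} {R : γ → γ → Prop} {P : γ → Prop}
    (hstep : ∀ a b, P a → R a b → P b) :
    ∀ l : List γ, List.Chain' R l → ∀ a, l.head? = some a → P a → ∀ c ∈ l, P c := by
  intro l
  induction l with
  | nil => simp
  | cons x t ih =>
    intro hc a ha hP c hm
    simp only [List.head?_cons, Option.some.injEq] at ha
    subst ha
    rcases List.mem_cons.mp hm with rfl | hm'
    · exact hP
    · cases t with
      | nil => simp at hm'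
      | cons y t' =>
        have hchain := List.isChain_cons_cons.mp hc
        exact ih hchain.2 y rfl (hstep _ _ hP hchain.1) c hm'

/-! #### From acceptance to membership in `Llin` -/

lemma getElem_congr_idx {α : Type*} (l : List α) {i j : ℕ} (h : i = j) (hi : i < l.length) :
    l[i]'hi = l[j]'(h ▸ hi) := by subst h; rfl

lemma good1_llin (u : List (Fin 3)) (hg : Good1 u (u.length + 1)) : u ∈ Llin := by
  obtain ⟨⟨k0, hk0pos, hk0lt, hk0t⟩, hmat, huniq⟩ := hg
  set n := u.length with hn
  have hmir : tape u (n + 1 - k0) = Sum.inl 2 := by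
    rw [← hmat k0 hk0pos hk0lt]; exact hk0t
  have hmm : n + 1 - k0 = k0 :=
    huniq _ _ (by omega) (by omega) hk0pos hk0lt hmir hk0t
  set m := k0 - 1 with hm
  have hnm : n = 2 * m + 1 := by omega
  have hget : ∀ j, (hj : j < n) → u[j]'(by omega) = u[n - 1 - j]'(by omega) := by
    intro j hj
    have h1 := hmat (j + 1) (by omega) (by omega)
    rw [tape_succ_lt u (by omega)] at h1
    have h2 : n + 1 - (j + 1) = (n - 1 - j) + 1 := by omega
    rw [h2, tape_succ_lt u (by omega)] at h1
    exact Sum.inl.inj h1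
  have hum : u[m]'(by omega) = 2 := by
    have hk0m : k0 = m + 1 := by omega
    have ht : tape u (m + 1) = Sum.inl 2 := by rw [← hk0m]; exact hk0t
    rw [tape_succ_lt u (by omega)] at ht
    exact Sum.inl.inj ht
  have hne2 : ∀ j, (hj : j < n) → j ≠ m → u[j]'(by omega) ≠ 2 := by
    intro j hj hjm h2
    have ht : tape u (j + 1) = Sum.inl 2 := by
      rw [tape_succ_lt u (by omega), h2]
    have := huniq (j + 1) k0 (by omega) (by omega) hk0pos hk0lt ht hk0t
    omega
  refine ⟨u.take m, ?_, ?_⟩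
  · intro x hx
    obtain ⟨j, hj, rfl⟩ := List.mem_iff_getElem.mp hx
    have hjm : j < m := by
      have := hj; simp only [List.length_take] at this; omega
    rw [List.getElem_take]
    exact hne2 j (by omega) (by omega)
  · have hdrop : u.drop (m + 1) = (u.take m).reverse := by
      apply List.ext_getElem
      · simp only [List.length_drop, List.length_reverse, List.length_take]; omega
      · intro j h1 h2
        rw [List.getElem_drop, List.getElem_reverse, List.getElem_take]
        have hjm : j < m := by
          simp only [List.length_drop] at h1; omega
        have h3 := hget (m + 1 + j) (by omega)
        have h4 : n - 1 - (m + 1 + j) = (u.take m).length - 1 - j := by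
          simp only [List.length_take]; omega
        rw [h3]
        exact getElem_congr_idx u h4 _
    have hsplit : u = u.take m ++ (u[m]'(by omega) :: u.drop (m + 1)) := by
      rw [← List.drop_eq_getElem_cons (by omega)]
      exact (List.take_append_drop m u).symm
    rw [hum, hdrop] at hsplit
    conv_lhs => rw [hsplit]
    simp

lemma accepts_mem_llin (u : List (Fin 3)) (h : Accepts Alin u) : u ∈ Llin := by
  obtain ⟨cs, hhead, hchain, cfin, hlast, hhalt, hacc⟩ := h
  have hmem : cfin ∈ cs := List.mem_of_mem_getLast? (by simp [hlast])
  have hinv : Inv u cfin :=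
    chain'_inv (inv_step u) cs hchain _ hhead (inv_init u) cfin hmem
  have hp2 : cfin.p = (2 : Fin 3) := by
    rcases hacc with hF | hF
    · exact hF
    · exact absurd hF (by simp [Alin, AccConf]; exact Set.notMem_empty _)
  unfold Inv at hinv
  rcases hinv with ⟨h0, -⟩ | ⟨h0, -⟩ | ⟨-, hg⟩
  · rw [hp2] at h0; exact absurd h0 (by show ¬(2 : Fin 3) = 0; decide)
  · rw [hp2] at h0; exact absurd h0 (by show ¬(2 : Fin 3) = 1; decide)
  · exact good1_llin u hg

/-! #### The accepting run on `w ++ [2] ++ w.reverse` -/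

def pSt (m t : ℕ) : Fin 3 := if t ≤ m + 1 then 0 else if t ≤ 2 * m + 2 then 1 else 2

def runF (m t : ℕ) : Config Alin := ⟨pSt m t, t, (), 2 * m + 2 - t⟩

def runList (m : ℕ) : List (Config Alin) := (List.range (2 * m + 4)).map (runF m)

lemma pSt_0 {m t : ℕ} (h : t ≤ m + 1) : pSt m t = 0 := if_pos h

lemma pSt_1 {m t : ℕ} (h1 : m + 1 < t) (h2 : t ≤ 2 * m + 2) : pSt m t = 1 := by
  unfold pSt
  rw [if_neg (by omega), if_pos h2]

lemma pSt_2 {m t : ℕ} (h : 2 * m + 2 < t) : pSt m t = 2 := by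
  unfold pSt
  rw [if_neg (by omega), if_neg (by omega)]

section Run

variable (w : List (Fin 3))

lemma ulen : (w ++ [2] ++ w.reverse).length = 2 * w.length + 1 := by
  simp only [List.length_append, List.length_reverse, List.length_cons, List.length_nil]
  omega

lemma upal (k : ℕ) (hk : k < 2 * w.length + 1) :
    (w ++ [2] ++ w.reverse)[k]'(by rw [ulen]; omega) =
      (w ++ [2] ++ w.reverse)[2 * w.length - k]'(by rw [ulen]; omega) := by
  set u := w ++ [2] ++ w.reverse with hu
  have hrev : u.reverse = u := by simp [hu]
  have hlen : u.length = 2 * w.length + 1 := ulen w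
  have h1 : u.reverse[k]'(by rw [List.length_reverse, hlen]; omega) =
      u[u.length - 1 - k]'(by rw [hlen]; omega) := List.getElem_reverse _
  have h2 : u.reverse[k]'(by rw [List.length_reverse, hlen]; omega) =
      u[k]'(by rw [hlen]; omega) := List.getElem_of_eq hrev _
  rw [← h2, h1]
  exact getElem_congr_idx u (by omega) _

lemma uelem (hw : ∀ x ∈ w, x ≠ 2) (k : ℕ) (hk : k < 2 * w.length + 1) :
    ((w ++ [2] ++ w.reverse)[k]'(by rw [ulen]; omega) = 2 ↔ k = w.length) := by
  rcases lt_trichotomy k w.length with h | h | h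
  · have e1 : (w ++ [2] ++ w.reverse)[k]'(by rw [ulen]; omega) = w[k]'h :=
      (List.getElem_of_eq (List.append_assoc w [2] w.reverse) _).trans
        (List.getElem_append_left h)
    rw [e1]
    constructor
    · intro h2; exact absurd h2 (hw _ (List.getElem_mem h))
    · intro h2; omega
  · subst h
    have e1 : (w ++ [2] ++ w.reverse)[w.length]'(by rw [ulen]; omega) = 2 := by
      rw [List.getElem_append_left (show w.length < (w ++ [2]).length by simp)]
      rw [List.getElem_append_right (le_refl w.length)]
      simp
    exact ⟨fun _ => rfl, fun _ => e1⟩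
  · have e1 : (w ++ [2] ++ w.reverse)[k]'(by rw [ulen]; omega) =
        w.reverse[k - (w.length + 1)]'(by rw [List.length_reverse]; omega) := by
      rw [List.getElem_append_right (show (w ++ [2]).length ≤ k by simp; omega)]
      exact getElem_congr_idx _ (by simp) _
    rw [e1, List.getElem_reverse]
    constructor
    · intro h2
      exact absurd h2 (hw _ (List.getElem_mem _))
    · intro h2; omega

lemma tape_pair (hw : ∀ x ∈ w, x ≠ 2) (t : ℕ) (h1 : 1 ≤ t) (h2 : t ≤ 2 * w.length + 1) :
    ∃ x : Fin 3, tape (w ++ [2] ++ w.reverse) t = Sum.inl x ∧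
      tape (w ++ [2] ++ w.reverse) (2 * w.length + 2 - t) = Sum.inl x ∧
      (x = 2 ↔ t = w.length + 1) := by
  set u := w ++ [2] ++ w.reverse with hu
  have hlen : u.length = 2 * w.length + 1 := ulen w
  obtain ⟨s, rfl⟩ : ∃ s, t = s + 1 := ⟨t - 1, by omega⟩
  refine ⟨u[s]'(by omega), tape_succ_lt u (by omega), ?_, ?_⟩
  · have e1 : 2 * w.length + 2 - (s + 1) = (2 * w.length - s) + 1 := by omega
    rw [e1, tape_succ_lt u (by omega)]
    have := upal w s (by omega)
    rw [← this]
  · have := uelem w hw s (by omega)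
    constructor
    · intro hx; have := this.mp hx; omega
    · intro hx; exact this.mpr (by omega)

lemma run_chain (hw : ∀ x ∈ w, x ≠ 2) :
    List.Chain' (Step Alin (w ++ [2] ++ w.reverse)) (runList w.length) := by
  set u := w ++ [2] ++ w.reverse with hu
  set m := w.length with hm
  have hlen : u.length = 2 * m + 1 := ulen w
  rw [runList]
  show List.IsChain _ _
  rw [List.isChain_map]
  have hss : (2 * m + 4) = (2 * m + 3) + 1 := rfl
  rw [hss, List.isChain_range_succ]
  intro t ht
  rcases Nat.eq_zero_or_pos t with rfl | htpos
  · -- initial step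
    refine ⟨true, true, ?_, ?_, ?_, ?_⟩
    · show d1f (pSt m 0) (tape u 0) (some (tape u (2 * m + 2 - 0))) = some (pSt m 1, true)
      rw [tape_zero, show 2 * m + 2 - 0 = 2 * m + 2 from rfl, tape_ge u (by omega)]
      rw [pSt_0 (by omega), pSt_0 (by omega)]
      exact d1f_start 0 (Or.inl rfl)
    · show d2f () (tape u (2 * m + 2 - 0)) (some (tape u 0)) = some ((), true)
      rw [tape_zero, show 2 * m + 2 - 0 = 2 * m + 2 from rfl, tape_ge u (by omega)]
      exact d2f_start
    · show 0 + 1 = 0 + (bif true then 1 else 0); rfl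
    · show 2 * m + 2 - 0 = (2 * m + 2 - (0 + 1)) + (bif true then 1 else 0)
      simp only [Bool.cond_true]; omega
  · rcases Nat.lt_or_ge t (2 * m + 2) with hmid | hend
    · -- middle steps: 1 ≤ t ≤ 2m+1
      obtain ⟨x, hx1, hx2, hx3⟩ := tape_pair w hw t (by omega) (by omega)
      refine ⟨true, true, ?_, ?_, ?_, ?_⟩
      · show d1f (pSt m t) (tape u t) (some (tape u (2 * m + 2 - t))) = some (pSt m (t + 1), true)
        rw [hx1, hx2]
        rcases Nat.lt_trichotomy t (m + 1) with h' | h' | h'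
        · rw [pSt_0 (by omega), pSt_0 (by omega)]
          have hx2' : x ≠ 2 := fun hxx => by omega
          exact d1f_eq_ne2 hx2' (Or.inl rfl)
        · subst h'
          rw [pSt_0 (by omega), pSt_1 (by omega) (by omega)]
          rw [hx3.mpr rfl]
          exact d1f_eq2_0
        · rw [pSt_1 (by omega) (by omega), pSt_1 (by omega) (by omega)]
          have hx2' : x ≠ 2 := fun hxx => by
            have := hx3.mp hxx; omega
          exact d1f_eq_ne2 hx2' (Or.inr rfl)
      · show d2f () (tape u (2 * m + 2 - t)) (some (tape u t)) = some ((), true)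
        rw [hx1, hx2]
        exact d2f_eq x
      · show t + 1 = t + (bif true then 1 else 0); rfl
      · show 2 * m + 2 - t = (2 * m + 2 - (t + 1)) + (bif true then 1 else 0)
        simp only [Bool.cond_true]; omega
    · -- final step: t = 2m+2
      have ht' : t = 2 * m + 2 := by omega
      subst ht'
      refine ⟨true, false, ?_, ?_, ?_, ?_⟩
      · show d1f (pSt m (2 * m + 2)) (tape u (2 * m + 2))
          (some (tape u (2 * m + 2 - (2 * m + 2)))) = some (pSt m (2 * m + 3), true)
        rw [show 2 * m + 2 - (2 * m + 2) = 0 from by omega, tape_zero, tape_ge u (by omega)]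
        rw [pSt_1 (by omega) (by omega), pSt_2 (by omega)]
        exact d1f_right1
      · show d2f () (tape u (2 * m + 2 - (2 * m + 2))) (some (tape u (2 * m + 2)))
          = some ((), false)
        rw [show 2 * m + 2 - (2 * m + 2) = 0 from by omega, tape_zero, tape_ge u (by omega)]
        exact d2f_end
      · show 2 * m + 2 + 1 = 2 * m + 2 + (bif true then 1 else 0); rfl
      · show 2 * m + 2 - (2 * m + 2) = (2 * m + 2 - (2 * m + 2 + 1)) + (bif false then 1 else 0)
        simp only [Bool.cond_false]; omega

lemma run_accComp (hw : ∀ x ∈ w, x ≠ 2) :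
    AccComp Alin (w ++ [2] ++ w.reverse) (runList w.length) := by
  set u := w ++ [2] ++ w.reverse with hu
  set m := w.length with hm
  have hlen : u.length = 2 * m + 1 := ulen w
  refine ⟨?_, run_chain w hw, runF m (2 * m + 3), ?_, ?_, ?_⟩
  · rw [runList]
    rw [show (2 * m + 4) = (2 * m + 3) + 1 from rfl, List.range_succ_eq_map]
    simp only [List.map_cons, List.head?_cons, Option.some.injEq]
    show runF m 0 = initConf Alin u
    unfold initConf runF
    rw [pSt_0 (by omega), hlen]
    congr 1
  · rw [runList]
    rw [show (2 * m + 4) = (2 * m + 3) + 1 from rfl, List.range_succ, List.map_append]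
    simp [List.getLast?_concat]
  · rintro ⟨c', d1, d2, h1, -⟩
    have h1' : d1f (pSt m (2 * m + 3)) (tape u (2 * m + 3))
        (some (tape u (2 * m + 2 - (2 * m + 3)))) = some (c'.p, d1) := h1
    rw [pSt_2 (by omega), d1f_two] at h1'
    cases h1'
  · left
    show pSt m (2 * m + 3) ∈ ({2} : Set (Fin 3))
    rw [pSt_2 (by omega)]
    rfl

end Run

lemma sum_map_two {γ : Type*} (f : γ → ℕ) (h : ∀ c, f c = 2) :
    ∀ l : List γ, (l.map f).sum = 2 * l.length := by
  intro l
  induction l with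
  | nil => simp
  | cons a t ih =>
    simp only [List.map_cons, List.sum_cons, ih, h a, List.length_cons]
    omega

lemma runList_length (m : ℕ) : (runList m).length = 2 * m + 4 := by
  simp [runList]

end LlinProof

open WK in
/-- `L_lin = { w c wᴿ : w ∈ {0,1}^* }` is accepted by a reversible
deterministic two-party Watson-Crick system with `O(n)` communications. -/
theorem Llin_in_REV_PWK_linear :
    ∃ (A : DPWK (Fin 3)) (C : ℕ),
      RevCommBounded A (fun n => C * n + C) ∧ lang A = Llin := by
  have hlang : lang LlinProof.Alin = Llin := by
    ext v
    constructor
    · intro hv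
      exact LlinProof.accepts_mem_llin v hv
    · rintro ⟨w, hw, rfl⟩
      exact ⟨LlinProof.runList w.length, LlinProof.run_accComp w hw⟩
  refine ⟨LlinProof.Alin, 6, ⟨LlinProof.wit, ?_⟩, hlang⟩
  intro v hv
  rw [hlang] at hv
  obtain ⟨w, hw, rfl⟩ := hv
  set u := w ++ [2] ++ w.reverse with hu
  set m := w.length with hm
  have hlen : u.length = 2 * m + 1 := LlinProof.ulen w
  refine ⟨LlinProof.runList m, LlinProof.run_accComp w hw, ?_, ?_⟩
  · show commCount LlinProof.Alin LlinProof.Alin.μ1 LlinProof.Alin.μ2 u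
      (LlinProof.runList m) ≤ 6 * u.length + 6
    unfold commCount
    rw [LlinProof.sum_map_two
      (stepMsgs LlinProof.Alin LlinProof.Alin.μ1 LlinProof.Alin.μ2 u) (fun c => rfl)]
    rw [List.length_dropLast, LlinProof.runList_length, hlen]
    omega
  · show commCount LlinProof.Alin LlinProof.wit.μ'1 LlinProof.wit.μ'2 u
      (LlinProof.runList m).reverse ≤ 6 * u.length + 6
    unfold commCount
    rw [LlinProof.sum_map_two
      (stepMsgs LlinProof.Alin LlinProof.wit.μ'1 LlinProof.wit.μ'2 u) (fun c => rfl)]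
    rw [List.length_dropLast, List.length_reverse, LlinProof.runList_length, hlen]
    omega
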